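/- arXiv:1711.06762 — 5 statements merged into one kernel-verified Lean document; each statement's English description precedes it below -/
import Mathlib

section
/- For every ℓ ≥ 1 there exists a constant C > 0 such that for all r > 0: (r^{ℓ+1}/(1+r²)^{3/4}) ∫₀^∞ r'^{ℓ+1}(1+r'²)^{1/4}/(r²+r'²+1)^{ℓ+1} dr' ≤ C. -/
open MeasureTheory

set_option maxHeartbeats 1000000 in
theorem schur_row_bound (ℓ : ℕ) (hℓ : 1 ≤ ℓ) :
    ∃ C : ℝ, 0 < C ∧ ∀ r : ℝ, 0 < r →
      (r ^ (ℓ + 1) / (1 + r ^ 2) ^ ((3 : ℝ) / 4)) *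
        (∫ r' in Set.Ioi (0 : ℝ),
          r' ^ (ℓ + 1) * (1 + r' ^ 2) ^ ((1 : ℝ) / 4) / (r ^ 2 + r' ^ 2 + 1) ^ (ℓ + 1)) ≤ C := by
  refine ⟨3, by norm_num, ?_⟩
  intro r hr
  have hℓ' : (1 : ℝ) ≤ (ℓ : ℝ) := by exact_mod_cast hℓ
  set s : ℝ := (ℓ : ℝ) + 1/2 with hs
  have hs1 : 1 < s := by rw [hs]; linarith
  have h1r : (0:ℝ) < 1 + r ^ 2 := by positivity
  set a : ℝ := Real.sqrt (1 + r ^ 2) with ha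
  have ha0 : 0 < a := Real.sqrt_pos.2 h1r
  have ha2 : a ^ 2 = 1 + r ^ 2 := Real.sq_sqrt h1r.le
  set M : ℝ := 1 + 1/(s-1) with hM
  have hsm : (0:ℝ) < s - 1 := by linarith
  have hM0 : 0 < M := by rw [hM]; positivity
  have hM3 : M ≤ 3 := by
    rw [hM]
    have h1 : (1:ℝ)/2 ≤ s - 1 := by rw [hs]; linarith
    have := one_div_le_one_div_of_le (by norm_num) h1
    simp only [one_div_one_div] at this
    linarith
  -- helper: nat pow bound via rpow
  have pow_le : ∀ x A : ℝ, 0 ≤ x → 0 < A → x ^ 2 ≤ A →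
      x ^ (ℓ + 1) ≤ A ^ (((ℓ:ℝ) + 1)/2) := by
    intro x A hx hA hxA
    have hxs : x ≤ Real.sqrt A := by
      rw [show x = Real.sqrt (x ^ 2) by rw [Real.sqrt_sq hx]]
      exact Real.sqrt_le_sqrt hxA
    calc x ^ (ℓ + 1) ≤ Real.sqrt A ^ (ℓ + 1) := pow_le_pow_left₀ hx hxs _
      _ = (A ^ ((1:ℝ)/2)) ^ ((ℓ + 1 : ℕ) : ℝ) := by
          rw [Real.rpow_natCast, Real.sqrt_eq_rpow]
      _ = A ^ (((ℓ:ℝ) + 1)/2) := by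
          rw [← Real.rpow_mul hA.le]; push_cast; ring_nf
  -- the dominating function
  set h : ℝ → ℝ := fun x => if x ≤ a then a ^ (-s) else x ^ (-s) with hh
  -- pointwise bound
  have key : ∀ x ∈ Set.Ioi (0:ℝ),
      x ^ (ℓ + 1) * (1 + x ^ 2) ^ ((1 : ℝ) / 4) / (r ^ 2 + x ^ 2 + 1) ^ (ℓ + 1) ≤ h x := by
    intro x hx
    simp only [Set.mem_Ioi] at hx
    set A : ℝ := r ^ 2 + x ^ 2 + 1 with hA
    have hA0 : (0:ℝ) < A := by positivity
    have h1 : x ^ (ℓ + 1) ≤ A ^ (((ℓ:ℝ) + 1)/2) := pow_le x A hx.le hA0 (by nlinarith)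
    have h2 : (1 + x ^ 2) ^ ((1:ℝ)/4) ≤ A ^ ((1:ℝ)/4) :=
      Real.rpow_le_rpow (by positivity) (by nlinarith) (by norm_num)
    have h3 : (A : ℝ) ^ (ℓ + 1) = A ^ (((ℓ:ℝ) + 1)) := by
      rw [← Real.rpow_natCast A (ℓ+1)]; push_cast; ring_nf
    have h4 : x ^ (ℓ + 1) * (1 + x ^ 2) ^ ((1 : ℝ) / 4) / A ^ (ℓ + 1) ≤
        A ^ (-s/2) := by
      rw [h3, div_le_iff₀ (by positivity), ← Real.rpow_add hA0]
      calc x ^ (ℓ + 1) * (1 + x ^ 2) ^ ((1 : ℝ) / 4)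
          ≤ A ^ (((ℓ:ℝ) + 1)/2) * A ^ ((1:ℝ)/4) :=
            mul_le_mul h1 h2 (by positivity) (by positivity)
        _ = A ^ (((ℓ:ℝ) + 1)/2 + (1:ℝ)/4) := (Real.rpow_add hA0 _ _).symm
        _ = A ^ (-s/2 + ((ℓ:ℝ) + 1)) := by rw [hs]; ring_nf
    refine h4.trans ?_
    by_cases hxa : x ≤ a
    · rw [hh]; simp only [if_pos hxa]
      have e : a ^ (-s) = (a ^ 2 : ℝ) ^ (-s/2) := by
        rw [← Real.rpow_natCast a 2, ← Real.rpow_mul ha0.le]; congr 1; ring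
      rw [e]
      exact Real.rpow_le_rpow_of_nonpos (by rw [ha2]; positivity)
        (by rw [ha2, hA]; nlinarith) (by linarith)
    · rw [hh]; simp only [if_neg hxa]
      have hxp : 0 < x := hx
      have e : x ^ (-s) = (x ^ 2 : ℝ) ^ (-s/2) := by
        rw [← Real.rpow_natCast x 2, ← Real.rpow_mul hxp.le]; congr 1; ring
      rw [e]
      exact Real.rpow_le_rpow_of_nonpos (by positivity)
        (by rw [hA]; nlinarith) (by linarith)
  -- integrability pieces of h
  have hIoc : IntegrableOn h (Set.Ioc 0 a) := by
    refine IntegrableOn.congr_fun (f := fun _ => a ^ (-s))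
      (integrableOn_const measure_Ioc_lt_top.ne) ?_ measurableSet_Ioc
    intro x hx
    exact (if_pos hx.2).symm
  have hIoi : IntegrableOn h (Set.Ioi a) := by
    refine (integrableOn_Ioi_rpow_of_lt (show -s < -1 by linarith) ha0).congr_fun ?_
      measurableSet_Ioi
    intro x hx
    exact (if_neg (not_le.2 hx)).symm
  have hIntH : IntegrableOn h (Set.Ioi 0) := by
    rw [← Set.Ioc_union_Ioi_eq_Ioi ha0.le]
    exact hIoc.union hIoi
  have hs1' : s - 1 ≠ 0 := by linarith
  -- value of ∫ h
  have hIH : ∫ x in Set.Ioi (0:ℝ), h x ≤ a ^ (1-s) * M := by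
    rw [← Set.Ioc_union_Ioi_eq_Ioi ha0.le,
      setIntegral_union (Set.Ioc_disjoint_Ioi le_rfl) measurableSet_Ioi hIoc hIoi]
    have e3 : ∫ x in Set.Ioc (0:ℝ) a, h x = a * a ^ (-s) := by
      rw [setIntegral_congr_fun measurableSet_Ioc (fun x hx => if_pos hx.2)]
      simp [Real.volume_Ioc, ENNReal.toReal_ofReal ha0.le, ha0.le]
    have e4 : ∫ x in Set.Ioi a, h x = a ^ (1-s) / (s-1) := by
      rw [setIntegral_congr_fun measurableSet_Ioi (fun x hx => if_neg (not_le.2 hx)),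
        integral_Ioi_rpow_of_lt (by linarith) ha0,
        show -s + 1 = 1 - s by ring]
      rw [div_eq_div_iff (by linarith) (by linarith)]
      ring
    rw [e3, e4]
    have e5 : a * a ^ (-s) = a ^ (1-s) := by
      nth_rewrite 1 [← Real.rpow_one a]
      rw [← Real.rpow_add ha0]; ring_nf
    rw [e5, hM]
    have : a ^ (1-s) * (1 + 1/(s-1)) = a ^ (1-s) + a ^ (1-s)/(s-1) := by
      field_simp
    rw [this]
  -- compare integrals
  have hf0 : (0:ℝ → ℝ) ≤ᵐ[volume.restrict (Set.Ioi (0:ℝ))]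
      fun x => x ^ (ℓ + 1) * (1 + x ^ 2) ^ ((1 : ℝ) / 4) / (r ^ 2 + x ^ 2 + 1) ^ (ℓ + 1) := by
    refine (ae_restrict_iff' measurableSet_Ioi).2 (ae_of_all _ fun x hx => ?_)
    have hx : 0 < x := hx
    positivity
  have hfh : (fun x => x ^ (ℓ + 1) * (1 + x ^ 2) ^ ((1 : ℝ) / 4) /
      (r ^ 2 + x ^ 2 + 1) ^ (ℓ + 1)) ≤ᵐ[volume.restrict (Set.Ioi (0:ℝ))] h :=
    (ae_restrict_iff' measurableSet_Ioi).2 (ae_of_all _ key)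
  have hmono : (∫ x in Set.Ioi (0:ℝ),
      x ^ (ℓ + 1) * (1 + x ^ 2) ^ ((1 : ℝ) / 4) / (r ^ 2 + x ^ 2 + 1) ^ (ℓ + 1)) ≤
      ∫ x in Set.Ioi (0:ℝ), h x :=
    integral_mono_of_nonneg hf0 hIntH hfh
  have hIb : (∫ x in Set.Ioi (0:ℝ),
      x ^ (ℓ + 1) * (1 + x ^ 2) ^ ((1 : ℝ) / 4) / (r ^ 2 + x ^ 2 + 1) ^ (ℓ + 1)) ≤
      a ^ (1-s) * M := hmono.trans hIH
  -- final arithmetic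
  have hP : (0:ℝ) ≤ r ^ (ℓ + 1) / (1 + r ^ 2) ^ ((3 : ℝ) / 4) := by positivity
  have hr1 : r ^ (ℓ + 1) ≤ (1 + r ^ 2) ^ (((ℓ:ℝ) + 1)/2) :=
    pow_le r _ hr.le h1r (by nlinarith)
  have e1 : a ^ (1-s) = (1 + r ^ 2) ^ ((1-s)/2) := by
    rw [ha, Real.sqrt_eq_rpow, ← Real.rpow_mul h1r.le]; ring_nf
  calc (r ^ (ℓ + 1) / (1 + r ^ 2) ^ ((3 : ℝ) / 4)) *
        (∫ x in Set.Ioi (0:ℝ),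
          x ^ (ℓ + 1) * (1 + x ^ 2) ^ ((1 : ℝ) / 4) / (r ^ 2 + x ^ 2 + 1) ^ (ℓ + 1))
      ≤ (r ^ (ℓ + 1) / (1 + r ^ 2) ^ ((3 : ℝ) / 4)) * (a ^ (1-s) * M) :=
        mul_le_mul_of_nonneg_left hIb hP
    _ ≤ ((1 + r ^ 2) ^ (((ℓ:ℝ) + 1)/2) / (1 + r ^ 2) ^ ((3 : ℝ) / 4)) *
        (a ^ (1-s) * M) := by
        apply mul_le_mul_of_nonneg_right _ (by positivity)
        exact (div_le_div_iff_of_pos_right (by positivity)).2 hr1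
    _ = M := by
        rw [e1]
        calc (1 + r ^ 2) ^ (((ℓ:ℝ) + 1)/2) / (1 + r ^ 2) ^ ((3 : ℝ) / 4) *
              ((1 + r ^ 2) ^ ((1-s)/2) * M)
            = (1 + r ^ 2) ^ (((ℓ:ℝ) + 1)/2) * (1 + r ^ 2) ^ ((1-s)/2) /
              (1 + r ^ 2) ^ ((3 : ℝ) / 4) * M := by ring
          _ = (1 + r ^ 2) ^ ((((ℓ:ℝ) + 1)/2 + (1-s)/2) - (3:ℝ)/4) * M := by
              rw [← Real.rpow_add h1r, ← Real.rpow_sub h1r]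
          _ = M := by
              rw [show (((ℓ:ℝ) + 1)/2 + (1-s)/2) - (3:ℝ)/4 = 0 by rw [hs]; ring,
                Real.rpow_zero, one_mul]
    _ ≤ 3 := hM3
end

section
/- For every ℓ ≥ 1 there exists a constant C > 0 such that for all r' > 0: r'^{ℓ+1}(1+r'²)^{1/4} ∫₀^∞ r^{ℓ+1}/((1+r²)^{3/4}(r²+r'²+1)^{ℓ+1}) dr ≤ C. -/
open MeasureTheory

set_option maxHeartbeats 1600000 in
theorem schur_column_bound (ℓ : ℕ) (hℓ : 1 ≤ ℓ) :
    ∃ C : ℝ, 0 < C ∧ ∀ r' : ℝ, 0 < r' →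
      r' ^ (ℓ + 1) * (1 + r' ^ 2) ^ ((1 : ℝ) / 4) *
        (∫ r in Set.Ioi (0 : ℝ),
          r ^ (ℓ + 1) / ((1 + r ^ 2) ^ ((3 : ℝ) / 4) * (r ^ 2 + r' ^ 2 + 1) ^ (ℓ + 1))) ≤ C := by
  refine ⟨5, by norm_num, ?_⟩
  intro r' hr'
  set s : ℝ := Real.sqrt (1 + r' ^ 2) with hs_def
  have hs2 : s ^ 2 = 1 + r' ^ 2 := Real.sq_sqrt (by positivity)
  have hs1 : 1 ≤ s := by
    nlinarith [hs2, Real.sqrt_nonneg (1 + r' ^ 2), sq_nonneg r']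
  have hs0 : 0 < s := lt_of_lt_of_le one_pos hs1
  have hr's : r' ≤ s := by
    have h1 : r' = Real.sqrt (r' ^ 2) := (Real.sqrt_sq hr'.le).symm
    rw [h1]
    exact Real.sqrt_le_sqrt (by nlinarith)
  -- rewrite prefactor with s
  have hsq : (1 + r' ^ 2) ^ ((1:ℝ)/4) = s ^ ((1:ℝ)/2) := by
    rw [← hs2, ← Real.rpow_natCast s 2, ← Real.rpow_mul hs0.le]
    norm_num
  have hst : s ^ ((3:ℝ)/2) = s * s ^ ((1:ℝ)/2) := by
    rw [show (3:ℝ)/2 = 1 + 1/2 by norm_num, Real.rpow_add hs0, Real.rpow_one]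
  -- the majorant
  set h : ℝ → ℝ := fun r => s ^ ((3:ℝ)/2) * r / ((1 + r ^ 2) ^ ((3:ℝ)/4) * (r ^ 2 + s ^ 2)) with hh_def
  have hcont : Continuous h := by
    apply Continuous.div
    · fun_prop
    · exact ((continuous_const.add (continuous_pow 2)).rpow_const
        (fun x => Or.inr (by norm_num))).mul
        ((continuous_pow 2).add continuous_const)
    · intro x
      have h1 : (0:ℝ) < (1 + x ^ 2) ^ ((3:ℝ)/4) := Real.rpow_pos_of_pos (by positivity) _
      have h2 : (0:ℝ) < x ^ 2 + s ^ 2 := by nlinarith [sq_nonneg x, pow_pos hs0 2]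
      positivity
  have hhnn : ∀ r : ℝ, 0 ≤ r → 0 ≤ h r := by
    intro r hr
    have h1 : (0:ℝ) < (1 + r ^ 2) ^ ((3:ℝ)/4) := Real.rpow_pos_of_pos (by positivity) _
    have h2 : (0:ℝ) < r ^ 2 + s ^ 2 := by nlinarith [sq_nonneg r, pow_pos hs0 2]
    have h3 : 0 ≤ s ^ ((3:ℝ)/2) := Real.rpow_nonneg hs0.le _
    positivity
  -- pointwise bound on Ioi s
  have hpt2 : ∀ r : ℝ, s < r → h r ≤ s ^ ((3:ℝ)/2) * r ^ (-(5:ℝ)/2) := by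
    intro r hr
    have hr0 : 0 < r := hs0.trans hr
    have hA : r ^ ((3:ℝ)/2) ≤ (1 + r ^ 2) ^ ((3:ℝ)/4) := by
      have : r ^ ((3:ℝ)/2) = (r ^ 2) ^ ((3:ℝ)/4) := by
        rw [← Real.rpow_natCast r 2, ← Real.rpow_mul hr0.le]; norm_num
      rw [this]
      exact Real.rpow_le_rpow (by positivity) (by nlinarith) (by norm_num)
    have hB : (r:ℝ) ^ 2 ≤ r ^ 2 + s ^ 2 := by nlinarith [pow_pos hs0 2]
    have hden : r ^ ((3:ℝ)/2) * r ^ 2 ≤ (1 + r ^ 2) ^ ((3:ℝ)/4) * (r ^ 2 + s ^ 2) :=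
      mul_le_mul hA hB (by positivity) (by positivity)
    have hdpos : 0 < r ^ ((3:ℝ)/2) * r ^ 2 := by
      have := Real.rpow_pos_of_pos hr0 ((3:ℝ)/2); positivity
    have hnum : 0 ≤ s ^ ((3:ℝ)/2) * r := by
      have := Real.rpow_nonneg hs0.le ((3:ℝ)/2); positivity
    have step : h r ≤ s ^ ((3:ℝ)/2) * r / (r ^ ((3:ℝ)/2) * r ^ 2) :=
      div_le_div_of_nonneg_left hnum hdpos hden
    refine step.trans_eq ?_
    have h72 : r ^ ((3:ℝ)/2) * r ^ 2 = r ^ ((7:ℝ)/2) := by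
      rw [← Real.rpow_natCast r 2, ← Real.rpow_add hr0]; norm_num
    rw [h72, mul_div_assoc]
    congr 1
    rw [show -(5:ℝ)/2 = 1 - 7/2 by norm_num, Real.rpow_sub hr0, Real.rpow_one]
  -- integrability of h
  have hi1 : IntegrableOn h (Set.Ioc 0 s) := hcont.integrableOn_Ioc
  have hmeas2 : AEStronglyMeasurable h (volume.restrict (Set.Ioi s)) :=
    hcont.aestronglyMeasurable.restrict
  have hgi2 : IntegrableOn (fun r : ℝ => s ^ ((3:ℝ)/2) * r ^ (-(5:ℝ)/2)) (Set.Ioi s) :=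
    (integrableOn_Ioi_rpow_of_lt (by norm_num) hs0).const_mul _
  have hi2 : IntegrableOn h (Set.Ioi s) := by
    refine hgi2.mono' hmeas2 ?_
    refine (ae_restrict_iff' measurableSet_Ioi).mpr (ae_of_all _ fun r hr => ?_)
    have hr : s < r := hr
    rw [Real.norm_of_nonneg (hhnn r (hs0.trans hr).le)]
    exact hpt2 r hr
  have hiIoi : IntegrableOn h (Set.Ioi 0) := by
    rw [← Set.Ioc_union_Ioi_eq_Ioi hs0.le]
    exact hi1.union hi2
  -- main pointwise bound
  set c : ℝ := r' ^ (ℓ + 1) * s ^ ((1:ℝ)/2) with hc_def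
  have hpt : ∀ r : ℝ, 0 < r →
      c * (r ^ (ℓ + 1) / ((1 + r ^ 2) ^ ((3:ℝ)/4) * (r ^ 2 + r' ^ 2 + 1) ^ (ℓ + 1))) ≤ h r := by
    intro r hr
    have hD : (0:ℝ) < (1 + r ^ 2) ^ ((3:ℝ)/4) := Real.rpow_pos_of_pos (by positivity) _
    have hrs2 : r ^ 2 + r' ^ 2 + 1 = r ^ 2 + s ^ 2 := by rw [hs2]; ring
    have hrsp : (0:ℝ) < r ^ 2 + s ^ 2 := by nlinarith [sq_nonneg r, pow_pos hs0 2]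
    rw [hrs2]
    have hnum : c * r ^ (ℓ + 1) ≤ s ^ ((3:ℝ)/2) * r * (r ^ 2 + s ^ 2) ^ ℓ := by
      have h1 : c * r ^ (ℓ + 1) ≤ s ^ (ℓ + 1) * s ^ ((1:ℝ)/2) * r ^ (ℓ + 1) := by
        have := pow_le_pow_left₀ hr'.le hr's (ℓ + 1)
        have hx : 0 ≤ s ^ ((1:ℝ)/2) * r ^ (ℓ + 1) := by
          have := Real.rpow_nonneg hs0.le ((1:ℝ)/2); positivity
        calc c * r ^ (ℓ + 1) = r' ^ (ℓ+1) * (s ^ ((1:ℝ)/2) * r ^ (ℓ+1)) := by ring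
          _ ≤ s ^ (ℓ+1) * (s ^ ((1:ℝ)/2) * r ^ (ℓ+1)) :=
              mul_le_mul_of_nonneg_right this hx
          _ = s ^ (ℓ + 1) * s ^ ((1:ℝ)/2) * r ^ (ℓ + 1) := by ring
      have h2 : s ^ (ℓ + 1) * s ^ ((1:ℝ)/2) * r ^ (ℓ + 1)
          = (s * r) ^ ℓ * (s * s ^ ((1:ℝ)/2) * r) := by ring
      have h3 : (s * r) ^ ℓ ≤ (r ^ 2 + s ^ 2) ^ ℓ :=
        pow_le_pow_left₀ (by positivity) (by nlinarith [sq_nonneg (r - s)]) ℓ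
      have h4 : 0 ≤ s * s ^ ((1:ℝ)/2) * r := by
        have := Real.rpow_nonneg hs0.le ((1:ℝ)/2); positivity
      calc c * r ^ (ℓ + 1) ≤ (s * r) ^ ℓ * (s * s ^ ((1:ℝ)/2) * r) := by rw [← h2]; exact h1
        _ ≤ (r ^ 2 + s ^ 2) ^ ℓ * (s * s ^ ((1:ℝ)/2) * r) :=
            mul_le_mul_of_nonneg_right h3 h4
        _ = s ^ ((3:ℝ)/2) * r * (r ^ 2 + s ^ 2) ^ ℓ := by rw [hst]; ring
    have hhr : h r = s ^ ((3:ℝ)/2) * r * (r ^ 2 + s ^ 2) ^ ℓ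
        / ((1 + r ^ 2) ^ ((3:ℝ)/4) * (r ^ 2 + s ^ 2) ^ (ℓ + 1)) := by
      rw [hh_def]
      have hne : ((r ^ 2 + s ^ 2) ^ ℓ : ℝ) ≠ 0 := by positivity
      rw [eq_div_iff (by positivity)]
      field_simp
      ring
    rw [hhr, mul_div_assoc', div_le_div_iff₀ (by positivity) (by positivity)]
    exact mul_le_mul_of_nonneg_right hnum (by positivity)
  -- assemble
  rw [mul_assoc, hsq, ← mul_assoc, ← hc_def, ← integral_const_mul]
  have step1 : (∫ r in Set.Ioi (0:ℝ),
      c * (r ^ (ℓ + 1) / ((1 + r ^ 2) ^ ((3:ℝ)/4) * (r ^ 2 + r' ^ 2 + 1) ^ (ℓ + 1))))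
      ≤ ∫ r in Set.Ioi (0:ℝ), h r := by
    refine integral_mono_of_nonneg ?_ hiIoi ?_
    · refine (ae_restrict_iff' measurableSet_Ioi).mpr (ae_of_all _ fun r hr => ?_)
      have hr : (0:ℝ) < r := hr
      have hD : (0:ℝ) < (1 + r ^ 2) ^ ((3:ℝ)/4) := Real.rpow_pos_of_pos (by positivity) _
      have hc0 : 0 ≤ c := by
        have := Real.rpow_nonneg hs0.le ((1:ℝ)/2)
        have := hr'.le
        positivity
      have hE : (0:ℝ) < (r ^ 2 + r' ^ 2 + 1) ^ (ℓ + 1) := by positivity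
      positivity
    · refine (ae_restrict_iff' measurableSet_Ioi).mpr (ae_of_all _ fun r hr => hpt r hr)
  refine step1.trans ?_
  -- split the integral
  have hsplit : (∫ r in Set.Ioi (0:ℝ), h r)
      = (∫ r in Set.Ioc 0 s, h r) + ∫ r in Set.Ioi s, h r := by
    rw [← setIntegral_union (Set.Ioc_disjoint_Ioi le_rfl) measurableSet_Ioi hi1 hi2,
      Set.Ioc_union_Ioi_eq_Ioi hs0.le]
  rw [hsplit]
  -- piece 1
  have hg1i : IntegrableOn (fun r : ℝ => s ^ (-(1:ℝ)/2) * (r / (1 + r ^ 2) ^ ((3:ℝ)/4)))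
      (Set.Ioc 0 s) := by
    apply Continuous.integrableOn_Ioc
    exact continuous_const.mul (continuous_id.div
      ((continuous_const.add (continuous_pow 2)).rpow_const (fun x => Or.inr (by norm_num)))
      (fun x => ne_of_gt (Real.rpow_pos_of_pos (by positivity) _)))
  have hb1 : (∫ r in Set.Ioc 0 s, h r)
      ≤ ∫ r in Set.Ioc 0 s, s ^ (-(1:ℝ)/2) * (r / (1 + r ^ 2) ^ ((3:ℝ)/4)) := by
    refine setIntegral_mono_on hi1 hg1i measurableSet_Ioc fun r hr => ?_
    obtain ⟨hr0, hrs⟩ := hr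
    have hD : (0:ℝ) < (1 + r ^ 2) ^ ((3:ℝ)/4) := Real.rpow_pos_of_pos (by positivity) _
    have hs2pos : (0:ℝ) < s ^ 2 := pow_pos hs0 2
    have hBle : s ^ 2 ≤ r ^ 2 + s ^ 2 := by nlinarith [sq_nonneg r]
    have hden : (1 + r ^ 2) ^ ((3:ℝ)/4) * s ^ 2
        ≤ (1 + r ^ 2) ^ ((3:ℝ)/4) * (r ^ 2 + s ^ 2) :=
      mul_le_mul_of_nonneg_left hBle hD.le
    have hnum : 0 ≤ s ^ ((3:ℝ)/2) * r := by
      have := Real.rpow_nonneg hs0.le ((3:ℝ)/2); positivity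
    have step : h r ≤ s ^ ((3:ℝ)/2) * r / ((1 + r ^ 2) ^ ((3:ℝ)/4) * s ^ 2) :=
      div_le_div_of_nonneg_left hnum (by positivity) hden
    refine step.trans_eq ?_
    have hkey : s ^ ((3:ℝ)/2) / s ^ 2 = s ^ (-(1:ℝ)/2) := by
      rw [← Real.rpow_natCast s 2, ← Real.rpow_sub hs0]; norm_num
    rw [← hkey, div_mul_div_comm, mul_comm ((1 + r ^ 2) ^ ((3:ℝ)/4)) (s ^ 2)]
  -- compute piece-1 integral
  have hint1 : (∫ r in Set.Ioc 0 s, r / (1 + r ^ 2) ^ ((3:ℝ)/4))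
      = 2 * (1 + s ^ 2) ^ ((1:ℝ)/4) - 2 := by
    rw [← intervalIntegral.integral_of_le hs0.le]
    have hderiv : ∀ x ∈ Set.uIcc (0:ℝ) s,
        HasDerivAt (fun r : ℝ => 2 * (1 + r ^ 2) ^ ((1:ℝ)/4))
          (x / (1 + x ^ 2) ^ ((3:ℝ)/4)) x := by
      intro x _
      have h0 : HasDerivAt (fun r : ℝ => 1 + r ^ 2) (2 * x) x := by
        simpa using ((hasDerivAt_pow 2 x).const_add 1)
      have h1 := (h0.rpow_const (p := (1:ℝ)/4) (Or.inl (by positivity))).const_mul 2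
      have heq : 2 * (2 * x * ((1:ℝ)/4) * (1 + x ^ 2) ^ ((1:ℝ)/4 - 1))
          = x / (1 + x ^ 2) ^ ((3:ℝ)/4) := by
        rw [show (1:ℝ)/4 - 1 = -((3:ℝ)/4) by norm_num,
          Real.rpow_neg (by positivity : (0:ℝ) ≤ 1 + x ^ 2), div_eq_mul_inv]
        ring
      exact heq ▸ h1
    have hint : IntervalIntegrable (fun r : ℝ => r / (1 + r ^ 2) ^ ((3:ℝ)/4)) volume 0 s := by
      apply Continuous.intervalIntegrable
      exact continuous_id.div
        ((continuous_const.add (continuous_pow 2)).rpow_const (fun x => Or.inr (by norm_num)))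
        (fun x => ne_of_gt (Real.rpow_pos_of_pos (by positivity) _))
    rw [intervalIntegral.integral_eq_sub_of_hasDerivAt hderiv hint]
    norm_num [Real.one_rpow]
  have hb1' : (∫ r in Set.Ioc 0 s, s ^ (-(1:ℝ)/2) * (r / (1 + r ^ 2) ^ ((3:ℝ)/4))) ≤ 4 := by
    rw [integral_const_mul, hint1]
    have hX : (1 + s ^ 2) ^ ((1:ℝ)/4) ≤ 2 * s ^ ((1:ℝ)/2) := by
      have e1 : (1 + s ^ 2) ^ ((1:ℝ)/4) ≤ (2 * s ^ 2) ^ ((1:ℝ)/4) :=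
        Real.rpow_le_rpow (by positivity) (by nlinarith [hs1, sq_nonneg (s - 1)]) (by norm_num)
      have e2 : ((2:ℝ) * s ^ 2) ^ ((1:ℝ)/4) = 2 ^ ((1:ℝ)/4) * (s ^ 2) ^ ((1:ℝ)/4) :=
        Real.mul_rpow (by norm_num) (by positivity)
      have e3 : ((s:ℝ) ^ 2) ^ ((1:ℝ)/4) = s ^ ((1:ℝ)/2) := by
        rw [← Real.rpow_natCast s 2, ← Real.rpow_mul hs0.le]; norm_num
      have e4 : (2:ℝ) ^ ((1:ℝ)/4) ≤ 2 := by
        calc (2:ℝ) ^ ((1:ℝ)/4) ≤ 2 ^ (1:ℝ) :=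
          Real.rpow_le_rpow_of_exponent_le one_le_two (by norm_num)
          _ = 2 := Real.rpow_one 2
      calc (1 + s ^ 2) ^ ((1:ℝ)/4) ≤ 2 ^ ((1:ℝ)/4) * (s ^ 2) ^ ((1:ℝ)/4) := by
            rw [← e2]; exact e1
        _ = 2 ^ ((1:ℝ)/4) * s ^ ((1:ℝ)/2) := by rw [e3]
        _ ≤ 2 * s ^ ((1:ℝ)/2) :=
            mul_le_mul_of_nonneg_right e4 (Real.rpow_nonneg hs0.le _)
    have hsm : s ^ (-(1:ℝ)/2) * s ^ ((1:ℝ)/2) = 1 := by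
      rw [← Real.rpow_add hs0]; norm_num
    have hs'nn : 0 ≤ s ^ (-(1:ℝ)/2) := Real.rpow_nonneg hs0.le _
    calc s ^ (-(1:ℝ)/2) * (2 * (1 + s ^ 2) ^ ((1:ℝ)/4) - 2)
        ≤ s ^ (-(1:ℝ)/2) * (2 * (2 * s ^ ((1:ℝ)/2))) := by
          refine mul_le_mul_of_nonneg_left ?_ hs'nn
          nlinarith [hX]
      _ = 4 * (s ^ (-(1:ℝ)/2) * s ^ ((1:ℝ)/2)) := by ring
      _ = 4 := by rw [hsm]; ring
  -- piece 2
  have hb2 : (∫ r in Set.Ioi s, h r) ≤ ∫ r in Set.Ioi s, s ^ ((3:ℝ)/2) * r ^ (-(5:ℝ)/2) :=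
    setIntegral_mono_on hi2 hgi2 measurableSet_Ioi fun r hr => hpt2 r hr
  have hb2' : (∫ r in Set.Ioi s, s ^ ((3:ℝ)/2) * r ^ (-(5:ℝ)/2)) = 2/3 := by
    rw [integral_const_mul, integral_Ioi_rpow_of_lt (by norm_num) hs0,
      show (-(5:ℝ)/2 + 1) = -((3:ℝ)/2) by norm_num]
    have h1 : s ^ ((3:ℝ)/2) * s ^ (-((3:ℝ)/2)) = 1 := by
      rw [← Real.rpow_add hs0]; norm_num
    calc s ^ ((3:ℝ)/2) * (-s ^ (-((3:ℝ)/2)) / (-(3/2)))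
        = (2/3) * (s ^ ((3:ℝ)/2) * s ^ (-((3:ℝ)/2))) := by ring
      _ = 2/3 := by rw [h1]; ring
  calc (∫ r in Set.Ioc 0 s, h r) + ∫ r in Set.Ioi s, h r
      ≤ 4 + 2/3 := add_le_add (hb1.trans hb1') (hb2.trans (le_of_eq hb2'))
    _ ≤ 5 := by norm_num
end

section
/- For every ℓ ≥ 1 the integral operator with kernel K^{(ℓ)}(r,r') = r^{ℓ+1} r'^{ℓ+1} (1+r'²)^{1/4} / ((1+r²)^{3/4}(r²+r'²+1)^{ℓ+1}) is bounded on L²((0,∞)). -/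
open MeasureTheory Set
open scoped ENNReal

lemma rpow_int_Ioc {r : ℝ} (hr : 0 < r) :
    ∫⁻ t in Set.Ioc (0:ℝ) r, ENNReal.ofReal (t ^ (-(1/2) : ℝ)) =
      ENNReal.ofReal (2 * r ^ ((1/2) : ℝ)) := by
  have hint : IntegrableOn (fun t : ℝ => t ^ (-(1/2) : ℝ)) (Set.Ioc 0 r) := by
    rw [← intervalIntegrable_iff_integrableOn_Ioc_of_le hr.le]
    exact intervalIntegral.intervalIntegrable_rpow' (by norm_num)
  rw [← ofReal_integral_eq_lintegral_ofReal hint]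
  · congr 1
    rw [← intervalIntegral.integral_of_le hr.le]
    rw [integral_rpow (Or.inl (by norm_num))]
    rw [Real.zero_rpow (by norm_num)]
    ring_nf
  · filter_upwards [ae_restrict_mem measurableSet_Ioc] with t ht
    exact Real.rpow_nonneg ht.1.le _

lemma rpow_int_Ioi {r : ℝ} (hr : 0 < r) :
    ∫⁻ t in Set.Ioi r, ENNReal.ofReal (t ^ (-(3/2) : ℝ)) =
      ENNReal.ofReal (2 * r ^ (-(1/2) : ℝ)) := by
  rw [← ofReal_integral_eq_lintegral_ofReal (integrableOn_Ioi_rpow_of_lt (by norm_num) hr)]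
  · congr 1
    rw [integral_Ioi_rpow_of_lt (by norm_num) hr]
    norm_num
    ring_nf
  · filter_upwards [ae_restrict_mem measurableSet_Ioi] with t ht
    exact Real.rpow_nonneg (hr.trans ht).le _

lemma schur_bound {r : ℝ} (hr : 0 < r) :
    ∫⁻ t in Set.Ioi (0:ℝ),
        ENNReal.ofReal ((r ^ 2 + t ^ 2) ^ (-(1/2) : ℝ) * t ^ (-(1/2) : ℝ)) ≤
      ENNReal.ofReal (4 * r ^ (-(1/2) : ℝ)) := by
  have hsplit : Set.Ioi (0:ℝ) = Set.Ioc 0 r ∪ Set.Ioi r := (Set.Ioc_union_Ioi_eq_Ioi hr.le).symm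
  rw [hsplit, lintegral_union measurableSet_Ioi Set.Ioc_disjoint_Ioi_same]
  have h1 : ∫⁻ t in Set.Ioc (0:ℝ) r,
      ENNReal.ofReal ((r ^ 2 + t ^ 2) ^ (-(1/2) : ℝ) * t ^ (-(1/2) : ℝ)) ≤
      ENNReal.ofReal (2 * r ^ (-(1/2) : ℝ)) := by
    have hmono : ∫⁻ t in Set.Ioc (0:ℝ) r,
        ENNReal.ofReal ((r ^ 2 + t ^ 2) ^ (-(1/2) : ℝ) * t ^ (-(1/2) : ℝ)) ≤
        ∫⁻ t in Set.Ioc (0:ℝ) r, ENNReal.ofReal r⁻¹ * ENNReal.ofReal (t ^ (-(1/2) : ℝ)) := by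
      apply setLIntegral_mono (by fun_prop)
      intro t ht
      rw [← ENNReal.ofReal_mul (by positivity)]
      apply ENNReal.ofReal_le_ofReal
      apply mul_le_mul_of_nonneg_right _ (Real.rpow_nonneg ht.1.le _)
      have : (r ^ 2 : ℝ) ^ (-(1/2) : ℝ) = r⁻¹ := by
        rw [← Real.rpow_natCast r 2, ← Real.rpow_mul hr.le]
        norm_num [Real.rpow_neg_one]
      rw [← this]
      exact Real.rpow_le_rpow_of_nonpos (by positivity) (by nlinarith [sq_nonneg t]) (by norm_num)
    refine hmono.trans ?_
    rw [lintegral_const_mul' _ _ ENNReal.ofReal_ne_top, rpow_int_Ioc hr,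
      ← ENNReal.ofReal_mul (by positivity)]
    apply ENNReal.ofReal_le_ofReal
    rw [show r⁻¹ = r ^ (-1 : ℝ) from (Real.rpow_neg_one r).symm]
    rw [mul_comm, mul_assoc, ← Real.rpow_add hr]
    norm_num
  have h2 : ∫⁻ t in Set.Ioi r,
      ENNReal.ofReal ((r ^ 2 + t ^ 2) ^ (-(1/2) : ℝ) * t ^ (-(1/2) : ℝ)) ≤
      ENNReal.ofReal (2 * r ^ (-(1/2) : ℝ)) := by
    have hmono : ∫⁻ t in Set.Ioi r,
        ENNReal.ofReal ((r ^ 2 + t ^ 2) ^ (-(1/2) : ℝ) * t ^ (-(1/2) : ℝ)) ≤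
        ∫⁻ t in Set.Ioi r, ENNReal.ofReal (t ^ (-(3/2) : ℝ)) := by
      apply setLIntegral_mono (by fun_prop)
      intro t ht
      have htpos : 0 < t := hr.trans ht
      apply ENNReal.ofReal_le_ofReal
      have hstep : (r ^ 2 + t ^ 2) ^ (-(1/2) : ℝ) ≤ t ^ (-1 : ℝ) := by
        have : (t ^ 2 : ℝ) ^ (-(1/2) : ℝ) = t ^ (-1 : ℝ) := by
          rw [← Real.rpow_natCast t 2, ← Real.rpow_mul htpos.le]
          norm_num
        rw [← this]
        exact Real.rpow_le_rpow_of_nonpos (by positivity) (by nlinarith [sq_nonneg r]) (by norm_num)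
      calc (r ^ 2 + t ^ 2) ^ (-(1/2) : ℝ) * t ^ (-(1/2) : ℝ)
          ≤ t ^ (-1 : ℝ) * t ^ (-(1/2) : ℝ) :=
            mul_le_mul_of_nonneg_right hstep (Real.rpow_nonneg htpos.le _)
        _ = t ^ (-(3/2) : ℝ) := by rw [← Real.rpow_add htpos]; norm_num
    refine hmono.trans ?_
    rw [rpow_int_Ioi hr]
  calc _ ≤ ENNReal.ofReal (2 * r ^ (-(1/2) : ℝ)) + ENNReal.ofReal (2 * r ^ (-(1/2) : ℝ)) :=
        add_le_add h1 h2
    _ = ENNReal.ofReal (4 * r ^ (-(1/2) : ℝ)) := by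
        rw [← ENNReal.ofReal_add (by positivity) (by positivity)]; ring_nf

lemma kernel_le {ℓ : ℕ} (hℓ : 1 ≤ ℓ) {r t : ℝ} (hr : 0 < r) (ht : 0 < t) :
    r ^ (ℓ + 1) * t ^ (ℓ + 1) * (1 + t ^ 2) ^ ((1:ℝ)/4) /
      ((1 + r ^ 2) ^ ((3:ℝ)/4) * (r ^ 2 + t ^ 2 + 1) ^ (ℓ + 1)) ≤
    (r ^ 2 + t ^ 2) ^ (-(1/2) : ℝ) := by
  set A : ℝ := 1 + r ^ 2 with hA
  set B : ℝ := 1 + t ^ 2 with hB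
  set S : ℝ := r ^ 2 + t ^ 2 + 1 with hS
  have hA1 : (1:ℝ) ≤ A := by nlinarith [sq_nonneg r]
  have hB1 : (1:ℝ) ≤ B := by nlinarith [sq_nonneg t]
  have hS1 : (1:ℝ) ≤ S := by nlinarith [sq_nonneg r, sq_nonneg t]
  have hA0 : (0:ℝ) < A := by linarith
  have hB0 : (0:ℝ) < B := by linarith
  have hS0 : (0:ℝ) < S := by linarith
  have hAS : A ≤ S := by nlinarith [sq_nonneg t]
  have hBS : B ≤ S := by nlinarith [sq_nonneg r]
  have hrt0 : (0:ℝ) < r ^ 2 + t ^ 2 := by positivity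
  have hstep1 : S ^ (-(1/2) : ℝ) ≤ (r ^ 2 + t ^ 2) ^ (-(1/2) : ℝ) :=
    Real.rpow_le_rpow_of_nonpos hrt0 (by nlinarith) (by norm_num)
  refine le_trans ?_ hstep1
  rw [div_le_iff₀ (by positivity)]
  set n : ℝ := (ℓ : ℝ) with hn
  have hn1 : (1:ℝ) ≤ n := by rw [hn]; exact_mod_cast hℓ
  -- convert nat powers to rpow
  have hrA : r ^ (ℓ + 1) ≤ A ^ ((n + 1)/2) := by
    have h1 : r ≤ A ^ ((1:ℝ)/2) := by
      have : r = (r ^ 2) ^ ((1:ℝ)/2) := by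
        rw [← Real.rpow_natCast r 2, ← Real.rpow_mul hr.le]; norm_num
      rw [this]
      exact Real.rpow_le_rpow (by positivity) (by nlinarith) (by norm_num)
    calc r ^ (ℓ + 1) ≤ (A ^ ((1:ℝ)/2)) ^ (ℓ + 1) := pow_le_pow_left₀ hr.le h1 _
      _ = A ^ ((n + 1)/2) := by
          rw [← Real.rpow_natCast (A ^ ((1:ℝ)/2)) (ℓ + 1), ← Real.rpow_mul hA0.le]
          push_cast
          ring_nf
          rw [hn]
  have htB : t ^ (ℓ + 1) ≤ B ^ ((n + 1)/2) := by
    have h1 : t ≤ B ^ ((1:ℝ)/2) := by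
      have : t = (t ^ 2) ^ ((1:ℝ)/2) := by
        rw [← Real.rpow_natCast t 2, ← Real.rpow_mul ht.le]; norm_num
      rw [this]
      exact Real.rpow_le_rpow (by positivity) (by nlinarith) (by norm_num)
    calc t ^ (ℓ + 1) ≤ (B ^ ((1:ℝ)/2)) ^ (ℓ + 1) := pow_le_pow_left₀ ht.le h1 _
      _ = B ^ ((n + 1)/2) := by
          rw [← Real.rpow_natCast (B ^ ((1:ℝ)/2)) (ℓ + 1), ← Real.rpow_mul hB0.le]
          push_cast
          ring_nf
          rw [hn]
  have hSpow : (S : ℝ) ^ (ℓ + 1) = S ^ (n + 1) := by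
    rw [← Real.rpow_natCast S (ℓ + 1)]; push_cast; ring_nf; rw [hn]
  calc r ^ (ℓ + 1) * t ^ (ℓ + 1) * B ^ ((1:ℝ)/4)
      ≤ A ^ ((n + 1)/2) * B ^ ((n + 1)/2) * B ^ ((1:ℝ)/4) := by
        have h2 : (0:ℝ) ≤ B ^ ((1:ℝ)/4) := by positivity
        have := mul_le_mul hrA htB (by positivity) (by positivity)
        exact mul_le_mul_of_nonneg_right this h2
    _ = A ^ ((3:ℝ)/4) * (A ^ ((2*n - 1)/4) * B ^ ((2*n + 3)/4)) := by
        rw [mul_assoc, ← Real.rpow_add hB0, ← mul_assoc, ← Real.rpow_add hA0]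
        ring_nf
    _ ≤ A ^ ((3:ℝ)/4) * (S ^ ((2*n - 1)/4) * S ^ ((2*n + 3)/4)) := by
        apply mul_le_mul_of_nonneg_left _ (by positivity)
        exact mul_le_mul (Real.rpow_le_rpow hA0.le hAS (by linarith))
          (Real.rpow_le_rpow hB0.le hBS (by linarith)) (by positivity) (by positivity)
    _ = S ^ (-(1/2) : ℝ) * (A ^ ((3:ℝ)/4) * S ^ (ℓ + 1)) := by
        rw [hSpow, ← Real.rpow_add hS0]
        rw [mul_comm (S ^ (-(1/2) : ℝ)), mul_assoc, ← Real.rpow_add hS0]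
        ring_nf

lemma kernel_nonneg {ℓ : ℕ} {r t : ℝ} (hr : 0 < r) (ht : 0 < t) :
    0 ≤ r ^ (ℓ + 1) * t ^ (ℓ + 1) * (1 + t ^ 2) ^ ((1:ℝ)/4) /
      ((1 + r ^ 2) ^ ((3:ℝ)/4) * (r ^ 2 + t ^ 2 + 1) ^ (ℓ + 1)) := by
  have h1 : (0:ℝ) < 1 + r ^ 2 := by nlinarith [sq_nonneg r]
  have h2 : (0:ℝ) < 1 + t ^ 2 := by nlinarith [sq_nonneg t]
  have h3 : (0:ℝ) < r ^ 2 + t ^ 2 + 1 := by nlinarith [sq_nonneg r, sq_nonneg t]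
  apply div_nonneg
  · exact mul_nonneg (mul_nonneg (pow_nonneg hr.le _) (pow_nonneg ht.le _))
      (Real.rpow_nonneg h2.le _)
  · exact mul_nonneg (Real.rpow_nonneg h1.le _) (pow_nonneg h3.le _)

lemma step2 {ℓ : ℕ} (hℓ : 1 ≤ ℓ) {h : ℝ → ℝ} (hm : Measurable h) {r : ℝ} (hr : 0 < r) :
    ENNReal.ofReal ((∫ t in Set.Ioi (0:ℝ),
        (r ^ (ℓ+1) * t ^ (ℓ+1) * (1 + t ^ 2) ^ ((1:ℝ)/4) /
          ((1 + r ^ 2) ^ ((3:ℝ)/4) * (r ^ 2 + t ^ 2 + 1) ^ (ℓ+1))) * h t) ^ 2) ≤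
      ENNReal.ofReal (4 * r ^ (-(1/2):ℝ)) *
        ∫⁻ t in Set.Ioi (0:ℝ),
          ENNReal.ofReal ((r ^ 2 + t ^ 2) ^ (-(1/2):ℝ) * t ^ ((1/2):ℝ) * (h t) ^ 2) := by
  set μ := volume.restrict (Set.Ioi (0:ℝ)) with hμ
  set Kf : ℝ → ℝ := fun t =>
    (r ^ (ℓ+1) * t ^ (ℓ+1) * (1 + t ^ 2) ^ ((1:ℝ)/4) /
      ((1 + r ^ 2) ^ ((3:ℝ)/4) * (r ^ 2 + t ^ 2 + 1) ^ (ℓ+1))) * h t with hKf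
  set I : ℝ≥0∞ := ∫⁻ t, ENNReal.ofReal ‖Kf t‖ ∂μ with hI
  set J : ℝ≥0∞ := ∫⁻ t, ENNReal.ofReal ((r ^ 2 + t ^ 2) ^ (-(1/2):ℝ) * |h t|) ∂μ with hJ
  set f : ℝ → ℝ≥0∞ := fun t =>
    (ENNReal.ofReal ((r ^ 2 + t ^ 2) ^ (-(1/2):ℝ) * t ^ (-(1/2):ℝ))) ^ ((1:ℝ)/2) with hf
  set g : ℝ → ℝ≥0∞ := fun t =>
    (ENNReal.ofReal ((r ^ 2 + t ^ 2) ^ (-(1/2):ℝ) * t ^ ((1/2):ℝ) * (h t) ^ 2)) ^ ((1:ℝ)/2)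
    with hg
  have hFle : |∫ t, Kf t ∂μ| ≤ I.toReal := by
    simpa [Real.norm_eq_abs, hI] using norm_integral_le_lintegral_norm (μ := μ) Kf
  have h1 : ENNReal.ofReal ((∫ t, Kf t ∂μ) ^ 2) ≤ I ^ 2 := by
    calc ENNReal.ofReal ((∫ t, Kf t ∂μ) ^ 2)
        = ENNReal.ofReal (|∫ t, Kf t ∂μ| ^ 2) := by rw [sq_abs]
      _ ≤ ENNReal.ofReal (I.toReal ^ 2) :=
          ENNReal.ofReal_le_ofReal (pow_le_pow_left₀ (abs_nonneg _) hFle 2)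
      _ = (ENNReal.ofReal I.toReal) ^ 2 := ENNReal.ofReal_pow ENNReal.toReal_nonneg 2
      _ ≤ I ^ 2 := pow_le_pow_left₀ (by positivity) ENNReal.ofReal_toReal_le 2
  have hIJ : I ≤ J := by
    apply lintegral_mono_ae
    filter_upwards [ae_restrict_mem measurableSet_Ioi] with t ht
    apply ENNReal.ofReal_le_ofReal
    rw [hKf]
    simp only [norm_mul, Real.norm_eq_abs]
    rw [abs_of_nonneg (kernel_nonneg hr ht)]
    exact mul_le_mul_of_nonneg_right (kernel_le hℓ hr ht) (abs_nonneg _)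
  have hfg : ∀ t ∈ Set.Ioi (0:ℝ),
      ENNReal.ofReal ((r ^ 2 + t ^ 2) ^ (-(1/2):ℝ) * |h t|) = (f * g) t := by
    intro t ht
    have ht0 : (0:ℝ) < t := ht
    have hL0 : (0:ℝ) ≤ (r ^ 2 + t ^ 2) ^ (-(1/2):ℝ) := Real.rpow_nonneg (by positivity) _
    simp only [Pi.mul_apply, hf, hg]
    rw [← ENNReal.mul_rpow_of_nonneg _ _ (by norm_num : (0:ℝ) ≤ 1/2)]
    rw [← ENNReal.ofReal_mul (by positivity)]
    have harith : (r ^ 2 + t ^ 2) ^ (-(1/2):ℝ) * t ^ (-(1/2):ℝ) *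
        ((r ^ 2 + t ^ 2) ^ (-(1/2):ℝ) * t ^ ((1/2):ℝ) * (h t) ^ 2) =
        ((r ^ 2 + t ^ 2) ^ (-(1/2):ℝ) * |h t|) ^ 2 := by
      have h12 : t ^ (-(1/2):ℝ) * t ^ ((1/2):ℝ) = 1 := by
        rw [← Real.rpow_add ht0]; norm_num
      have habs : |h t| ^ 2 = (h t) ^ 2 := sq_abs _
      linear_combination (((r ^ 2 + t ^ 2) ^ (-(1/2):ℝ)) ^ 2 * (h t) ^ 2) * h12 -
        ((r ^ 2 + t ^ 2) ^ (-(1/2):ℝ)) ^ 2 * habs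
    rw [harith, ENNReal.ofReal_pow (by positivity)]
    rw [← ENNReal.rpow_natCast _ 2, ← ENNReal.rpow_mul]
    norm_num
  have hJfg : J = ∫⁻ t, (f * g) t ∂μ :=
    setLIntegral_congr_fun measurableSet_Ioi (fun t ht => hfg t ht)
  have hfmeas : AEMeasurable f μ := by
    apply Measurable.aemeasurable
    apply Measurable.pow_const
    apply Measurable.ennreal_ofReal
    fun_prop
  have hgmeas : AEMeasurable g μ := by
    apply Measurable.aemeasurable
    apply Measurable.pow_const
    apply Measurable.ennreal_ofReal
    fun_prop
  have hHolder := ENNReal.lintegral_mul_le_Lp_mul_Lq μ (p := 2) (q := 2)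
    (Real.holderConjugate_iff.mpr ⟨one_lt_two, by norm_num⟩) hfmeas hgmeas
  have hf2 : ∀ t : ℝ, f t ^ (2:ℝ) =
      ENNReal.ofReal ((r ^ 2 + t ^ 2) ^ (-(1/2):ℝ) * t ^ (-(1/2):ℝ)) := by
    intro t
    rw [hf, ← ENNReal.rpow_mul]
    try norm_num
  have hg2 : ∀ t : ℝ, g t ^ (2:ℝ) =
      ENNReal.ofReal ((r ^ 2 + t ^ 2) ^ (-(1/2):ℝ) * t ^ ((1/2):ℝ) * (h t) ^ 2) := by
    intro t
    rw [hg, ← ENNReal.rpow_mul]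
    try norm_num
  simp only [hf2, hg2] at hHolder
  set B : ℝ≥0∞ := ∫⁻ t, ENNReal.ofReal ((r ^ 2 + t ^ 2) ^ (-(1/2):ℝ) * t ^ ((1/2):ℝ) * (h t) ^ 2) ∂μ
    with hB
  have hfinal : I ≤ (ENNReal.ofReal (4 * r ^ (-(1/2):ℝ))) ^ ((1:ℝ)/2) * B ^ ((1:ℝ)/2) := by
    refine (hIJ.trans (hJfg.le.trans (hHolder.trans ?_)))
    exact mul_le_mul_left (ENNReal.rpow_le_rpow (schur_bound hr) (by norm_num)) _
  refine h1.trans ?_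
  calc I ^ 2 ≤ ((ENNReal.ofReal (4 * r ^ (-(1/2):ℝ))) ^ ((1:ℝ)/2) * B ^ ((1:ℝ)/2)) ^ 2 :=
        pow_le_pow_left₀ (by positivity) hfinal 2
    _ = ENNReal.ofReal (4 * r ^ (-(1/2):ℝ)) * B := by
        rw [mul_pow, ← ENNReal.rpow_natCast ((ENNReal.ofReal (4 * r ^ (-(1/2):ℝ))) ^ ((1:ℝ)/2)) 2,
          ← ENNReal.rpow_natCast (B ^ ((1:ℝ)/2)) 2, ← ENNReal.rpow_mul, ← ENNReal.rpow_mul]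
        norm_num

theorem kernel_Kl_bounded_on_L2 (ℓ : ℕ) (hℓ : 1 ≤ ℓ) :
    ∃ C : ℝ, 0 < C ∧
      ∀ h : ℝ → ℝ, Measurable h → IntegrableOn (fun r => (h r) ^ 2) (Set.Ioi 0) →
        (∫ r in Set.Ioi (0 : ℝ),
            (∫ r' in Set.Ioi (0 : ℝ),
              (r ^ (ℓ + 1) * r' ^ (ℓ + 1) * (1 + r' ^ 2) ^ ((1 : ℝ) / 4) /
                ((1 + r ^ 2) ^ ((3 : ℝ) / 4) * (r ^ 2 + r' ^ 2 + 1) ^ (ℓ + 1))) * h r') ^ 2) ≤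
          C ^ 2 * ∫ r in Set.Ioi (0 : ℝ), (h r) ^ 2 := by
  refine ⟨4, by norm_num, ?_⟩
  intro h hm hint
  set μ := volume.restrict (Set.Ioi (0:ℝ)) with hμ
  set F : ℝ → ℝ := fun r => ∫ t in Set.Ioi (0:ℝ),
    (r ^ (ℓ + 1) * t ^ (ℓ + 1) * (1 + t ^ 2) ^ ((1 : ℝ) / 4) /
      ((1 + r ^ 2) ^ ((3 : ℝ) / 4) * (r ^ 2 + t ^ 2 + 1) ^ (ℓ + 1))) * h t with hF
  set G : ℝ → ℝ≥0∞ := fun r => ∫⁻ t, ENNReal.ofReal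
    ((r ^ 2 + t ^ 2) ^ (-(1/2):ℝ) * t ^ ((1/2):ℝ) * (h t) ^ 2) ∂μ with hG
  set Φ : ℝ → ℝ → ℝ≥0∞ := fun r t =>
    ENNReal.ofReal (t ^ ((1/2):ℝ) * (h t) ^ 2) *
      (ENNReal.ofReal 4 * ENNReal.ofReal ((t ^ 2 + r ^ 2) ^ (-(1/2):ℝ) * r ^ (-(1/2):ℝ)))
    with hΦ
  -- step A
  have hA : (∫ r, (F r) ^ 2 ∂μ) ≤ (∫⁻ r, ENNReal.ofReal ((F r) ^ 2) ∂μ).toReal := by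
    refine le_trans (le_abs_self _) ?_
    have := norm_integral_le_lintegral_norm (μ := μ) (fun r => (F r) ^ 2)
    simpa [Real.norm_eq_abs, sq_abs] using this
  -- step B
  have hB : (∫⁻ r, ENNReal.ofReal ((F r) ^ 2) ∂μ) ≤
      ∫⁻ r, ENNReal.ofReal (4 * r ^ (-(1/2):ℝ)) * G r ∂μ := by
    apply lintegral_mono_ae
    filter_upwards [ae_restrict_mem measurableSet_Ioi] with r hr
    exact step2 hℓ hm hr
  -- step C
  have hC : (∫⁻ r, ENNReal.ofReal (4 * r ^ (-(1/2):ℝ)) * G r ∂μ) =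
      ∫⁻ r, (∫⁻ t, Φ r t ∂μ) ∂μ := by
    apply setLIntegral_congr_fun measurableSet_Ioi
    intro r hr
    have hr0 : (0:ℝ) < r := hr
    beta_reduce
    rw [hG, ← lintegral_const_mul' _ _ ENNReal.ofReal_ne_top]
    apply setLIntegral_congr_fun measurableSet_Ioi
    intro t ht
    have ht0 : (0:ℝ) < t := ht
    simp only [hΦ]
    rw [← ENNReal.ofReal_mul (by norm_num : (0:ℝ) ≤ 4),
      ← ENNReal.ofReal_mul (mul_nonneg (Real.rpow_nonneg ht0.le _) (sq_nonneg _)),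
      ← ENNReal.ofReal_mul (by positivity)]
    congr 1
    rw [add_comm (t ^ 2) (r ^ 2)]
    ring
  -- step D : swap
  have hmeas : AEMeasurable (fun p : ℝ × ℝ => Φ p.1 p.2) (μ.prod μ) := by
    apply Measurable.aemeasurable
    rw [hΦ]
    fun_prop
  have hD : (∫⁻ r, (∫⁻ t, Φ r t ∂μ) ∂μ) = ∫⁻ t, (∫⁻ r, Φ r t ∂μ) ∂μ :=
    lintegral_lintegral_swap hmeas
  -- step E
  have hE : (∫⁻ t, (∫⁻ r, Φ r t ∂μ) ∂μ) ≤ ∫⁻ t, ENNReal.ofReal (16 * (h t) ^ 2) ∂μ := by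
    apply lintegral_mono_ae
    filter_upwards [ae_restrict_mem measurableSet_Ioi] with t ht
    have ht0 : (0:ℝ) < t := ht
    rw [hΦ]
    rw [lintegral_const_mul' _ _ ENNReal.ofReal_ne_top,
      lintegral_const_mul' _ _ ENNReal.ofReal_ne_top]
    have hS := schur_bound ht0
    calc ENNReal.ofReal (t ^ ((1/2):ℝ) * (h t) ^ 2) * (ENNReal.ofReal 4 *
          ∫⁻ r, ENNReal.ofReal ((t ^ 2 + r ^ 2) ^ (-(1/2):ℝ) * r ^ (-(1/2):ℝ)) ∂μ)
        ≤ ENNReal.ofReal (t ^ ((1/2):ℝ) * (h t) ^ 2) * (ENNReal.ofReal 4 *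
          ENNReal.ofReal (4 * t ^ (-(1/2):ℝ))) := by
          exact mul_le_mul_right (mul_le_mul_right hS _) _
      _ = ENNReal.ofReal (16 * (h t) ^ 2) := by
          rw [← ENNReal.ofReal_mul (by norm_num), ← ENNReal.ofReal_mul (by positivity)]
          congr 1
          have h12 : t ^ ((1/2):ℝ) * t ^ (-(1/2):ℝ) = 1 := by
            rw [← Real.rpow_add ht0]; norm_num
          linear_combination 16 * (h t) ^ 2 * h12
  -- step F
  have hF16 : (∫⁻ t, ENNReal.ofReal (16 * (h t) ^ 2) ∂μ) =
      ENNReal.ofReal (16 * ∫ t, (h t) ^ 2 ∂μ) := by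
    rw [← ofReal_integral_eq_lintegral_ofReal (hint.const_mul 16)
      (Filter.Eventually.of_forall fun t => by positivity)]
    rw [MeasureTheory.integral_const_mul]
  have hend : (∫⁻ r, ENNReal.ofReal ((F r) ^ 2) ∂μ) ≤
      ENNReal.ofReal (16 * ∫ t, (h t) ^ 2 ∂μ) := by
    rw [← hF16]
    exact hB.trans (le_of_eq hC)|>.trans (le_of_eq hD)|>.trans hE
  have : (∫ r, (F r) ^ 2 ∂μ) ≤ 16 * ∫ t, (h t) ^ 2 ∂μ := by
    refine hA.trans ?_
    have := ENNReal.toReal_mono ENNReal.ofReal_ne_top hend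
    have hnn : 0 ≤ ∫ t, (h t) ^ 2 ∂μ := integral_nonneg fun t => sq_nonneg _
    rwa [ENNReal.toReal_ofReal (mul_nonneg (by norm_num) hnn)] at this
  calc (∫ r in Set.Ioi (0:ℝ), (F r) ^ 2) ≤ 16 * ∫ t, (h t) ^ 2 ∂μ := this
    _ = 4 ^ 2 * ∫ r in Set.Ioi (0:ℝ), (h r) ^ 2 := by norm_num [hμ]
end

section
/- The Efimov function Λ(m) := (2/π)(m+1)²(1/√(m(m+2)) − arcsin(1/(m+1))) is strictly positive for all m > 0. -/
noncomputable def efimovLambda (m : ℝ) : ℝ :=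
  (2 / Real.pi) * (m + 1) ^ 2 *
    (1 / Real.sqrt (m * (m + 2)) - Real.arcsin (1 / (m + 1)))

theorem efimovLambda_pos (m : ℝ) (hm : 0 < m) : 0 < efimovLambda m := by
  have h1 : (0:ℝ) < m + 1 := by linarith
  have hx0 : 0 < 1/(m+1) := by positivity
  have hx1 : 1/(m+1) < 1 := by rw [div_lt_one h1]; linarith
  have hmm : 0 < m * (m + 2) := by nlinarith
  have hs : 0 < Real.sqrt (m * (m + 2)) := Real.sqrt_pos.2 hmm
  have hsq : Real.sqrt (1 - (1/(m+1))^2) = Real.sqrt (m*(m+2)) / (m+1) := by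
    have h2 : 1 - (1/(m+1))^2 = m*(m+2)/(m+1)^2 := by field_simp; ring
    rw [h2, Real.sqrt_div hmm.le, Real.sqrt_sq h1.le]
  have key : Real.arcsin (1/(m+1)) < 1 / Real.sqrt (m*(m+2)) := by
    have ht : Real.tan (Real.arcsin (1/(m+1))) = 1 / Real.sqrt (m*(m+2)) := by
      rw [Real.tan_arcsin, hsq]
      field_simp
    have := Real.lt_tan (Real.arcsin_pos.2 hx0)
      ((Real.arcsin_lt_pi_div_two).2 hx1)
    rw [ht] at this
    exact this
  have : 0 < 1 / Real.sqrt (m*(m+2)) - Real.arcsin (1/(m+1)) := by linarith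
  unfold efimovLambda
  have hpi := Real.pi_pos
  positivity
end

section
/- The Efimov function Λ(m) := (2/π)(m+1)²(1/√(m(m+2)) − arcsin(1/(m+1))) is strictly monotone decreasing on (0,∞), tends to +∞ as m → 0⁺, and tends to 0 as m → +∞; in particular there is a unique m* > 0 with Λ(m*) = 1. -/
open Filter Real Set

/-- Numerator function `A t = t/√(1-t²) - arcsin t`. -/
noncomputable def efA (t : ℝ) : ℝ := t / Real.sqrt (1 - t ^ 2) - Real.arcsin t

/-- `φ t = t·A'(t) - 2·A(t)`, the key auxiliary function. -/
noncomputable def efPhi (t : ℝ) : ℝ :=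
  t ^ 3 / ((1 - t ^ 2) * Real.sqrt (1 - t ^ 2)) - 2 * t / Real.sqrt (1 - t ^ 2)
    + 2 * Real.arcsin t

/-- `g t = A t / t²`, so that `Λ m = (2/π) g (1/(m+1))`. -/
noncomputable def efG (t : ℝ) : ℝ := efA t / t ^ 2

lemma ef_sq_pos {t : ℝ} (ht : t ∈ Set.Ioo (-1:ℝ) 1) : 0 < 1 - t ^ 2 := by
  nlinarith [ht.1, ht.2]

lemma hasDerivAt_sqrt_one_sub_sq {t : ℝ} (ht : t ∈ Set.Ioo (-1:ℝ) 1) :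
    HasDerivAt (fun t : ℝ => Real.sqrt (1 - t ^ 2)) (-t / Real.sqrt (1 - t ^ 2)) t := by
  have h1 := ef_sq_pos ht
  have hs : 0 < Real.sqrt (1 - t ^ 2) := Real.sqrt_pos.mpr h1
  have hinner : HasDerivAt (fun t : ℝ => 1 - t ^ 2) (-(2 * t)) t := by
    simpa using (hasDerivAt_pow 2 t).const_sub 1
  have h := (Real.hasDerivAt_sqrt h1.ne').comp t hinner
  refine h.congr_deriv ?_
  symm
  field_simp

lemma hasDerivAt_efA {t : ℝ} (ht : t ∈ Set.Ioo (-1:ℝ) 1) :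
    HasDerivAt efA (t ^ 2 / ((1 - t ^ 2) * Real.sqrt (1 - t ^ 2))) t := by
  have h1 := ef_sq_pos ht
  have hs : 0 < Real.sqrt (1 - t ^ 2) := Real.sqrt_pos.mpr h1
  have hs2 : Real.sqrt (1 - t ^ 2) ^ 2 = 1 - t ^ 2 := Real.sq_sqrt h1.le
  have hdiv := (hasDerivAt_id t).div (hasDerivAt_sqrt_one_sub_sq ht) hs.ne'
  have h := hdiv.sub (Real.hasDerivAt_arcsin ht.1.ne' ht.2.ne)
  refine h.congr_deriv ?_
  symm
  rw [hs2]
  field_simp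
  simp only [id, hs2]
  ring

lemma hasDerivAt_efPhi {t : ℝ} (ht : t ∈ Set.Ioo (-1:ℝ) 1) :
    HasDerivAt efPhi
      ((t ^ 2 + 2 * t ^ 4) / ((1 - t ^ 2) ^ 2 * Real.sqrt (1 - t ^ 2))) t := by
  have h1 := ef_sq_pos ht
  have hs : 0 < Real.sqrt (1 - t ^ 2) := Real.sqrt_pos.mpr h1
  have hs2 : Real.sqrt (1 - t ^ 2) ^ 2 = 1 - t ^ 2 := Real.sq_sqrt h1.le
  have hinner : HasDerivAt (fun t : ℝ => 1 - t ^ 2) (-(2 * t)) t := by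
    simpa using (hasDerivAt_pow 2 t).const_sub 1
  have hD : HasDerivAt (fun t : ℝ => (1 - t ^ 2) * Real.sqrt (1 - t ^ 2))
      (-(2 * t) * Real.sqrt (1 - t ^ 2) + (1 - t ^ 2) * (-t / Real.sqrt (1 - t ^ 2))) t :=
    hinner.mul (hasDerivAt_sqrt_one_sub_sq ht)
  have hDne : (1 - t ^ 2) * Real.sqrt (1 - t ^ 2) ≠ 0 := by positivity
  have h₁ := (hasDerivAt_pow 3 t).div hD hDne
  have h₂ := ((hasDerivAt_id t).const_mul 2).div (hasDerivAt_sqrt_one_sub_sq ht) hs.ne'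
  have h₃ := (Real.hasDerivAt_arcsin ht.1.ne' ht.2.ne).const_mul 2
  have h := (h₁.sub h₂).add h₃
  refine h.congr_deriv ?_
  symm
  simp only [id]
  field_simp
  rw [hs2]
  norm_num
  ring

lemma hasDerivAt_efG {t : ℝ} (ht : t ∈ Set.Ioo (0:ℝ) 1) :
    HasDerivAt efG (efPhi t / t ^ 3) t := by
  have ht' : t ∈ Set.Ioo (-1:ℝ) 1 := ⟨by linarith [ht.1], ht.2⟩
  have h := (hasDerivAt_efA ht').div (hasDerivAt_pow 2 t) (pow_ne_zero 2 ht.1.ne')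
  refine h.congr_deriv ?_
  symm
  have hphi : efPhi t = t * (t ^ 2 / ((1 - t ^ 2) * Real.sqrt (1 - t ^ 2))) - 2 * efA t := by
    simp only [efPhi, efA]
    ring
  rw [hphi]
  have h1 : (0:ℝ) < 1 - t ^ 2 := by nlinarith [ht.1, ht.2]
  have hs : 0 < Real.sqrt (1 - t ^ 2) := Real.sqrt_pos.mpr h1
  field_simp [ht.1.ne', hs.ne', h1.ne']
  ring

lemma efPhi_pos {t : ℝ} (ht : t ∈ Set.Ioo (0:ℝ) 1) : 0 < efPhi t := by
  have hmono : StrictMonoOn efPhi (Set.Ico (0:ℝ) 1) := by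
    apply strictMonoOn_of_deriv_pos (convex_Ico 0 1)
    · intro x hx
      exact (hasDerivAt_efPhi ⟨by linarith [hx.1], hx.2⟩).differentiableAt.continuousAt.continuousWithinAt
    · intro x hx
      rw [interior_Ico] at hx
      have hx' : x ∈ Set.Ioo (-1:ℝ) 1 := ⟨by linarith [hx.1], hx.2⟩
      rw [(hasDerivAt_efPhi hx').deriv]
      have h1 := ef_sq_pos hx'
      have hs : 0 < Real.sqrt (1 - x ^ 2) := Real.sqrt_pos.mpr h1
      have hx0 := hx.1
      exact div_pos (by nlinarith [pow_pos hx0 2, pow_pos hx0 4]) (mul_pos (pow_pos h1 2) hs)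
  have h0 : efPhi 0 = 0 := by simp [efPhi]
  have := hmono (Set.left_mem_Ico.mpr one_pos) ⟨ht.1.le, ht.2⟩ ht.1
  rwa [h0] at this

lemma efG_strictMono : StrictMonoOn efG (Set.Ioo (0:ℝ) 1) := by
  apply strictMonoOn_of_deriv_pos (convex_Ioo 0 1)
  · intro x hx
    exact (hasDerivAt_efG hx).differentiableAt.continuousAt.continuousWithinAt
  · intro x hx
    rw [interior_Ioo] at hx
    rw [(hasDerivAt_efG hx).deriv]
    exact div_pos (efPhi_pos hx) (pow_pos hx.1 3)

lemma efA_pos {t : ℝ} (ht : t ∈ Set.Ioo (0:ℝ) 1) : 0 < efA t := by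
  have h1 : 0 < Real.arcsin t := Real.arcsin_pos.mpr ht.1
  have h2 : Real.arcsin t < π / 2 := Real.arcsin_lt_pi_div_two.mpr ht.2
  have h := Real.lt_tan h1 h2
  rw [Real.tan_arcsin] at h
  simpa [efA, sub_pos] using h

lemma efA_le {t : ℝ} (ht : t ∈ Set.Ioo (0:ℝ) 1) (ht2 : t ≤ 1/2) : efA t ≤ 2 * t ^ 3 := by
  have h1 : (0:ℝ) < 1 - t ^ 2 := by nlinarith [ht.1, ht.2]
  have hs : 0 < Real.sqrt (1 - t ^ 2) := Real.sqrt_pos.mpr h1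
  have hs2 : Real.sqrt (1 - t ^ 2) ^ 2 = 1 - t ^ 2 := Real.sq_sqrt h1.le
  have hsle : Real.sqrt (1 - t ^ 2) ≤ 1 := by
    have h := Real.sqrt_le_sqrt (show 1 - t ^ 2 ≤ 1 by nlinarith)
    rwa [Real.sqrt_one] at h
  have hsge : 1 - t ^ 2 ≤ Real.sqrt (1 - t ^ 2) := by nlinarith
  have harc : t ≤ Real.arcsin t := by
    have h := Real.arcsin_sin (x := t) (by nlinarith [Real.pi_pos, ht.1])
      (by nlinarith [Real.pi_gt_three])
    calc t = Real.arcsin (Real.sin t) := h.symm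
    _ ≤ Real.arcsin t := Real.monotone_arcsin (Real.sin_le ht.1.le)
  have key : t / Real.sqrt (1 - t ^ 2) - t ≤ 2 * t ^ 3 := by
    rw [sub_le_iff_le_add, div_le_iff₀ hs]
    have hpos : (0:ℝ) ≤ 2 * t ^ 3 + t := by nlinarith [pow_pos ht.1 3, ht.1]
    have hm := mul_le_mul_of_nonneg_left hsge hpos
    have ht2' : t * t ≤ 1 / 4 := by nlinarith [ht.1, ht2]
    have h5 : t ^ 5 ≤ t ^ 3 / 4 := by nlinarith [pow_pos ht.1 3, ht2']
    nlinarith [hm, h5, pow_pos ht.1 3]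
  calc efA t = t / Real.sqrt (1 - t ^ 2) - Real.arcsin t := rfl
  _ ≤ t / Real.sqrt (1 - t ^ 2) - t := by linarith
  _ ≤ 2 * t ^ 3 := key

lemma one_div_mem {m : ℝ} (hm : 0 < m) : 1 / (m + 1) ∈ Set.Ioo (0:ℝ) 1 := by
  constructor
  · positivity
  · rw [div_lt_one (by linarith)]; linarith

lemma efimovLambda_eq {m : ℝ} (hm : 0 < m) :
    efimovLambda m = 2 / Real.pi * efG (1 / (m + 1)) := by
  have hm1 : (0:ℝ) < m + 1 := by linarith
  have hmm : (0:ℝ) < m * (m + 2) := by nlinarith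
  have hq : 0 < Real.sqrt (m * (m + 2)) := Real.sqrt_pos.mpr hmm
  have h2 : Real.sqrt (1 - (1 / (m + 1)) ^ 2) = Real.sqrt (m * (m + 2)) / (m + 1) := by
    rw [show 1 - (1 / (m + 1)) ^ 2 = m * (m + 2) / (m + 1) ^ 2 by field_simp; ring,
      Real.sqrt_div hmm.le, Real.sqrt_sq hm1.le]
  unfold efimovLambda efG efA
  rw [h2]
  have hpi := Real.pi_pos
  field_simp

lemma efimov_strictAnti : StrictAntiOn efimovLambda (Set.Ioi 0) := by
  intro a ha b hb hab
  rw [Set.mem_Ioi] at ha hb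
  rw [efimovLambda_eq ha, efimovLambda_eq hb]
  have hpi : (0:ℝ) < 2 / Real.pi := by positivity
  apply mul_lt_mul_of_pos_left _ hpi
  exact efG_strictMono (one_div_mem hb) (one_div_mem ha)
    (by apply one_div_lt_one_div_of_lt <;> linarith)

lemma efimov_continuousOn : ContinuousOn efimovLambda (Set.Ioi 0) := by
  unfold efimovLambda
  apply ContinuousOn.mul (by fun_prop)
  apply ContinuousOn.sub
  · apply ContinuousOn.div continuousOn_const (by fun_prop)
    intro m hm
    rw [Set.mem_Ioi] at hm
    exact (Real.sqrt_pos.mpr (by nlinarith)).ne'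
  · apply Real.continuous_arcsin.comp_continuousOn
    apply ContinuousOn.div continuousOn_const (by fun_prop)
    intro m hm
    rw [Set.mem_Ioi] at hm
    exact (by linarith : (0:ℝ) < m + 1).ne'

lemma efimov_tendsto_top : Tendsto efimovLambda (nhdsWithin 0 (Set.Ioi 0)) atTop := by
  have hpi := Real.pi_pos
  have h1 : Tendsto (fun m : ℝ => 2 / Real.pi * (m + 1) ^ 2) (nhdsWithin 0 (Set.Ioi 0))
      (nhds (2 / Real.pi)) := by
    have h : Tendsto (fun m : ℝ => 2 / Real.pi * (m + 1) ^ 2) (nhds 0)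
        (nhds (2 / Real.pi * (0 + 1) ^ 2)) := by
      exact (Continuous.tendsto (by fun_prop) 0)
    simpa using h.mono_left nhdsWithin_le_nhds
  have h2 : Tendsto (fun m : ℝ => Real.sqrt (m * (m + 2))) (nhdsWithin 0 (Set.Ioi 0))
      (nhdsWithin 0 (Set.Ioi 0)) := by
    apply tendsto_nhdsWithin_of_tendsto_nhds_of_eventually_within
    · have h : Tendsto (fun m : ℝ => Real.sqrt (m * (m + 2))) (nhds 0)
          (nhds (Real.sqrt (0 * (0 + 2)))) := Continuous.tendsto (by fun_prop) 0
      simpa using h.mono_left nhdsWithin_le_nhds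
    · filter_upwards [self_mem_nhdsWithin] with m hm
      rw [Set.mem_Ioi] at hm ⊢
      exact Real.sqrt_pos.mpr (by nlinarith)
  have h3 : Tendsto (fun m : ℝ => 1 / Real.sqrt (m * (m + 2))) (nhdsWithin 0 (Set.Ioi 0))
      atTop := by
    simpa [one_div, Function.comp_def] using tendsto_inv_nhdsGT_zero.comp h2
  have h4 : Tendsto (fun m : ℝ => -Real.arcsin (1 / (m + 1))) (nhdsWithin 0 (Set.Ioi 0))
      (nhds (-(π / 2))) := by
    have hca : ContinuousAt (fun m : ℝ => -Real.arcsin (1 / (m + 1))) 0 := by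
      apply ContinuousAt.neg
      exact Real.continuous_arcsin.continuousAt.comp
        (ContinuousAt.div continuousAt_const (by fun_prop) (by norm_num))
    have h := hca.tendsto
    simp only [zero_add, div_one, Real.arcsin_one] at h
    exact h.mono_left nhdsWithin_le_nhds
  have h5 : Tendsto (fun m : ℝ => 1 / Real.sqrt (m * (m + 2)) - Real.arcsin (1 / (m + 1)))
      (nhdsWithin 0 (Set.Ioi 0)) atTop := by
    have := h4.add_atTop h3
    simpa [add_comm, sub_eq_add_neg] using this
  have := h1.pos_mul_atTop (by positivity) h5
  exact this

lemma efimov_tendsto_zero : Tendsto efimovLambda atTop (nhds 0) := by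
  have hpi := Real.pi_pos
  have hub : Tendsto (fun m : ℝ => 4 / Real.pi * (1 / (m + 1))) atTop (nhds 0) := by
    have h1 : Tendsto (fun m : ℝ => m + 1) atTop atTop :=
      tendsto_atTop_add_const_right _ _ tendsto_id
    have h2 := (tendsto_inv_atTop_zero).comp h1
    have h3 := h2.const_mul (4 / Real.pi)
    simpa [one_div] using h3
  apply tendsto_of_tendsto_of_tendsto_of_le_of_le' tendsto_const_nhds hub
  · filter_upwards [eventually_gt_atTop (0:ℝ)] with m hm
    rw [efimovLambda_eq hm]
    have hg : 0 < efG (1 / (m + 1)) := by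
      have := efA_pos (one_div_mem hm)
      exact div_pos this (by positivity)
    positivity
  · filter_upwards [eventually_ge_atTop (1:ℝ)] with m hm
    have hm0 : (0:ℝ) < m := by linarith
    rw [efimovLambda_eq hm0]
    have ht := one_div_mem hm0
    have ht2 : 1 / (m + 1) ≤ 1 / 2 := by
      apply one_div_le_one_div_of_le <;> linarith
    have hA := efA_le ht ht2
    have : efG (1 / (m + 1)) ≤ 2 * (1 / (m + 1)) := by
      rw [efG, div_le_iff₀ (by positivity)]
      calc efA (1 / (m + 1)) ≤ 2 * (1 / (m + 1)) ^ 3 := hA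
      _ = 2 * (1 / (m + 1)) * (1 / (m + 1)) ^ 2 := by ring
    calc 2 / Real.pi * efG (1 / (m + 1)) ≤ 2 / Real.pi * (2 * (1 / (m + 1))) := by
          apply mul_le_mul_of_nonneg_left this (by positivity)
    _ = 4 / Real.pi * (1 / (m + 1)) := by ring

theorem efimovLambda_strictAnti_limits_and_unique_root :
    StrictAntiOn efimovLambda (Set.Ioi 0) ∧
    Tendsto efimovLambda (nhdsWithin 0 (Set.Ioi 0)) atTop ∧
    Tendsto efimovLambda atTop (nhds 0) ∧
    ∃! m : ℝ, 0 < m ∧ efimovLambda m = 1 := by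
  refine ⟨efimov_strictAnti, efimov_tendsto_top, efimov_tendsto_zero, ?_⟩
  obtain ⟨a, haL, ha⟩ : ∃ a, 1 < efimovLambda a ∧ a ∈ Set.Ioi (0:ℝ) :=
    ((efimov_tendsto_top.eventually_gt_atTop 1).and self_mem_nhdsWithin).exists
  rw [Set.mem_Ioi] at ha
  obtain ⟨b, hbL, hb⟩ : ∃ b, efimovLambda b < 1 ∧ a < b := by
    have h1 : ∀ᶠ m in atTop, efimovLambda m < 1 :=
      efimov_tendsto_zero.eventually_lt_const one_pos
    exact (h1.and (eventually_gt_atTop a)).exists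
  have hsub : Set.Icc a b ⊆ Set.Ioi 0 := fun x hx => lt_of_lt_of_le ha hx.1
  have hcont := efimov_continuousOn.mono hsub
  have h1mem : (1:ℝ) ∈ Set.Icc (efimovLambda b) (efimovLambda a) := ⟨hbL.le, haL.le⟩
  obtain ⟨m, hm, hΛ⟩ := intermediate_value_Icc' hb.le hcont h1mem
  have hm0 : 0 < m := lt_of_lt_of_le ha hm.1
  refine ⟨m, ⟨hm0, hΛ⟩, ?_⟩
  rintro y ⟨hy0, hy1⟩
  exact efimov_strictAnti.injOn (Set.mem_Ioi.mpr hy0) (Set.mem_Ioi.mpr hm0) (hy1.trans hΛ.symm)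
end
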